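/- arXiv:0907.0942 — 2 statements merged into one kernel-verified Lean document; each statement's English description precedes it below -/
import Mathlib

section
/- Let L be a regular language over a finite alphabet Σ and let L_∞ be the set of infinite words over Σ with infinitely many prefixes in L. Then L_∞ is uncountable if and only if every deterministic finite automaton A = (Q, q₀, Σ, δ, F) accepting L contains two distinct cycles based at a common accessible state, each of the two cycles passing through a final state; precisely: there exist an accessible state q and words u, v with δ(q, u) = q, δ(q, v) = q, uv ≠ vu, some prefix u' of u satisfying δ(q, u') ∈ F, and some prefix v' of v satisfying δ(q, v') ∈ F. -/
/-- The prefix of length `ℓ` of an infinite word `w : ℕ → A`. -/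
def prefixOf {A : Type*} (w : ℕ → A) (ℓ : ℕ) : List A := List.ofFn (fun i : Fin ℓ => w i)

/-- `Linf L` : infinite words having infinitely many finite prefixes in `L`. -/
def Linf {A : Type*} (L : Set (List A)) : Set (ℕ → A) :=
  {w | {n : ℕ | prefixOf w n ∈ L}.Infinite}

/-- Transition function of a deterministic automaton extended to words. -/
def deltaStar {Q A : Type*} (δ : Q → A → Q) (q : Q) (w : List A) : Q := w.foldl δ q

/-!
If an accessible state `q` carries two non-commuting loops `u`, `v` through final states, then
`uv` and `vu` are distinct loops of the same length, and the words `x b₀ b₁ b₂ …` with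
`x` leading to `q` and every block `bⱼ ∈ {uv, vu}` form an injective image of `ℕ → Bool`
inside `L_∞`.

Conversely, if all loops at accessible final states commute, let `w ∈ L_∞` and let `f` be a final
state reached by infinitely many prefixes `w[0, n)`, one of them at `n₀`. The factors
`w[n₀, m)` between two such visits are loops at `f`, so they all commute with
`t = w[n₀, n₁)`; a word commuting with `t` is a prefix of `t^ω`, hence `w = w[0, n₀) t^ω`.
There are only countably many such eventually periodic words.
-/

section

variable {α Γ Q : Type*}

theorem deltaStar_append (δ : Q → α → Q) (q : Q) (x y : List α) :
    deltaStar δ q (x ++ y) = deltaStar δ (deltaStar δ q x) y :=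
  List.foldl_append

theorem prefixOf_eq_take (w : Stream' α) (n : ℕ) : prefixOf w n = w.take n :=
  List.ext_getElem (by simp [prefixOf, Stream'.length_take]) fun i _ _ => by
    simp only [prefixOf, List.getElem_ofFn, Stream'.take_get]; rfl

theorem mem_Linf_iff {L : Set (List α)} {w : Stream' α} :
    w ∈ Linf L ↔ {n | w.take n ∈ L}.Infinite := by
  show {n | prefixOf w n ∈ L}.Infinite ↔ _
  simp only [prefixOf_eq_take]

theorem uncountable_nat_to_bool : Uncountable (ℕ → Bool) :=
  Cardinal.aleph0_lt_mk_iff.1 (by simpa using Cardinal.cantor Cardinal.aleph0)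

section BlockConcat

/-- The infinite concatenation `B 0 ++ B 1 ++ ⋯` of blocks of common length `ℓ`; the letter `d`
is a filler that is never read when every block has length `ℓ`. -/
def blockConcat (ℓ : ℕ) (B : ℕ → List α) (d : α) : Stream' α :=
  fun n => (B (n / ℓ)).getD (n % ℓ) d

variable {ℓ : ℕ} {B B' : ℕ → List α} {d : α}

theorem blockConcat_eq_append (hℓ : 0 < ℓ) (hB : ∀ j, (B j).length = ℓ) :
    blockConcat ℓ B d = B 0 ++ₛ blockConcat ℓ (fun j => B (j + 1)) d := by
  refine Stream'.ext fun n => ?_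
  rcases lt_or_ge n ℓ with hn | hn
  · rw [Stream'.get_append_left n _ _ (by rwa [hB])]
    simp [Stream'.get, blockConcat, Nat.div_eq_of_lt hn, Nat.mod_eq_of_lt hn, hB, hn]
  · obtain ⟨m, rfl⟩ := Nat.exists_eq_add_of_le hn
    rw [← hB 0, Stream'.get_append_right, hB 0]
    simp [Stream'.get, blockConcat, Nat.add_div_left m hℓ]

theorem blockConcat_injective (hℓ : 0 < ℓ) (hB : ∀ j, (B j).length = ℓ)
    (hB' : ∀ j, (B' j).length = ℓ) (h : blockConcat ℓ B d = blockConcat ℓ B' d) : B = B' := by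
  funext j
  induction j generalizing B B' with
  | zero =>
    rw [blockConcat_eq_append hℓ hB, blockConcat_eq_append hℓ hB'] at h
    exact Stream'.append_left_injective _ _ _ _ h (by rw [hB, hB'])
  | succ j ih =>
    rw [blockConcat_eq_append hℓ hB, blockConcat_eq_append hℓ hB'] at h
    have h0 := Stream'.append_left_injective _ _ _ _ h (by rw [hB, hB'])
    rw [h0] at h
    exact ih (B := fun k => B (k + 1)) (B' := fun k => B' (k + 1)) (fun _ => hB _) (fun _ => hB' _)
      (Stream'.append_right_injective _ _ _ h)

theorem deltaStar_take_blockConcat (hℓ : 0 < ℓ) (hB : ∀ j, (B j).length = ℓ) {δ : Q → α → Q}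
    {q : Q} (hloop : ∀ j, deltaStar δ q (B j) = q) (j : ℕ) {i : ℕ} (hi : i ≤ ℓ) :
    deltaStar δ q ((blockConcat ℓ B d).take (j * ℓ + i)) = deltaStar δ q ((B j).take i) := by
  induction j generalizing B with
  | zero =>
    rw [blockConcat_eq_append hℓ hB, zero_mul, zero_add,
      Stream'.take_append_of_le_length _ _ _ (by rwa [hB])]
  | succ j ih =>
    rw [blockConcat_eq_append hℓ hB, show (j + 1) * ℓ + i = (B 0).length + (j * ℓ + i) by
      rw [hB]; ring, ← Stream'.append_take, deltaStar_append, hloop 0]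
    exact ih (fun _ => hB _) (fun _ => hloop _)

end BlockConcat

theorem not_countable_Linf_of_loops {q0 q : Q} {δ : Q → Γ → Q} {F : Set Q}
    (hq : ∃ x, deltaStar δ q0 x = q) {p p' c c' : List Γ}
    (hp : deltaStar δ q p = q) (hp' : deltaStar δ q p' = q)
    (hlen : p.length = p'.length) (hne : p ≠ p')
    (hc : c <+: p) (hcF : deltaStar δ q c ∈ F) (hc' : c' <+: p') (hc'F : deltaStar δ q c' ∈ F) :
    ¬ (Linf {w | deltaStar δ q0 w ∈ F}).Countable := by
  obtain ⟨x, hx⟩ := hq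
  have hp0 : p ≠ [] := by
    rintro rfl
    exact hne (List.eq_nil_of_length_eq_zero hlen.symm).symm
  set ℓ := p.length
  have hℓ : 0 < ℓ := List.length_pos_of_ne_nil hp0
  let B : Bool → List Γ := fun b => cond b p p'
  let C : Bool → List Γ := fun b => cond b c c'
  have hBC : ∀ b, (B b).length = ℓ ∧ deltaStar δ q (B b) = q ∧ C b <+: B b ∧
      deltaStar δ q (C b) ∈ F := by
    intro b; cases b
    exacts [⟨hlen.symm, hp', hc', hc'F⟩, ⟨rfl, hp, hc, hcF⟩]
  have hB : Function.Injective B := by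
    intro b b' h
    cases b <;> cases b'
    exacts [rfl, absurd h.symm hne, absurd h hne, rfl]
  let W : (ℕ → Bool) → Stream' Γ := fun b => x ++ₛ blockConcat ℓ (fun j => B (b j)) (p.head hp0)
  have hW : Function.Injective W := by
    intro b b' h
    have hblocks := blockConcat_injective hℓ (fun j => (hBC (b j)).1) (fun j => (hBC (b' j)).1)
      (Stream'.append_right_injective _ _ _ h)
    exact funext fun j => hB (congrFun hblocks j)
  have hmem : ∀ b, W b ∈ Linf {w | deltaStar δ q0 w ∈ F} := by
    intro b
    have hvisit : ∀ j, (W b).take (x.length + (j * ℓ + (C (b j)).length)) ∈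
        {w | deltaStar δ q0 w ∈ F} := by
      intro j
      obtain ⟨hlenB, -, hCB, hCF⟩ := hBC (b j)
      rw [Set.mem_ofPred, ← Stream'.append_take, deltaStar_append, hx,
        deltaStar_take_blockConcat hℓ (fun j => (hBC (b j)).1) (fun j => (hBC (b j)).2.1) j
          (hlenB ▸ hCB.length_le), ← List.prefix_iff_eq_take.1 hCB]
      exact hCF
    rw [mem_Linf_iff]
    refine Set.infinite_of_forall_exists_gt fun a => ⟨_, hvisit (a + 1), ?_⟩
    nlinarith
  intro hcount
  -- `Linf` is a set of `ℕ → Γ` while `W` lands in `Stream' Γ`, so the instance is passed by hand.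
  exact uncountable_nat_to_bool.not_countable
    (@Function.Injective.countable _ _ hcount.to_subtype _ ((Set.injective_codRestrict hmem).2 hW))

theorem List.eq_take_cycle_of_append_comm {t : List α} (ht : t ≠ []) {s : List α}
    (h : t ++ s = s ++ t) : s = (Stream'.cycle t ht).take s.length := by
  induction hn : s.length using Nat.strong_induction_on generalizing s with
  | _ n ih =>
  have hts : t <+: t ++ s := List.prefix_append t s
  have hst : s <+: t ++ s := h ▸ List.prefix_append s t
  rcases le_or_gt s.length t.length with hle | hlt
  · rw [← hn, Stream'.cycle_eq, Stream'.take_append_of_le_length _ _ _ hle]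
    exact List.prefix_iff_eq_take.1 (List.prefix_of_prefix_length_le hst hts hle)
  · obtain ⟨s', rfl⟩ := List.prefix_of_prefix_length_le hts hst hlt.le
    have h' : t ++ s' = s' ++ t := by simpa using h
    have hlen : s'.length < n := by
      rw [← hn, List.length_append]
      have := List.length_pos_of_ne_nil ht
      omega
    rw [← hn, List.length_append, Stream'.cycle_eq, ← Stream'.append_take,
      ← ih s'.length hlen h' rfl]

theorem Stream'.eq_cycle_of_append_comm {s : Stream' α} {t : List α} (ht : t ≠ [])
    (h : ∀ n, ∃ m ≥ n, t ++ s.take m = s.take m ++ t) : s = Stream'.cycle t ht :=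
  Stream'.take_theorem _ _ fun n => by
    obtain ⟨m, hnm, hm⟩ := h n
    have hpre := congrArg (List.take n) (List.eq_take_cycle_of_append_comm ht hm)
    simpa [Stream'.length_take, Stream'.take_take, hnm] using hpre

theorem Linf_countable_of_loops_commute [Countable Γ] [Finite Q] (q0 : Q) (δ : Q → Γ → Q)
    (F : Set Q) (hcomm : ∀ f ∈ F, (∃ x, deltaStar δ q0 x = f) →
      ∀ u v, deltaStar δ f u = f → deltaStar δ f v = f → u ++ v = v ++ u) :
    (Linf {w | deltaStar δ q0 w ∈ F}).Countable := by
  refine (Set.countable_range fun z : List Γ × {t : List Γ // t ≠ []} =>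
    (z.1 ++ₛ Stream'.cycle z.2.1 z.2.2 : ℕ → Γ)).mono ?_
  rintro (w : Stream' Γ) hw
  obtain ⟨f, hfF, hf⟩ : ∃ f ∈ F, {n | deltaStar δ q0 (w.take n) = f}.Infinite := by
    by_contra! hfin
    exact mem_Linf_iff.1 hw ((F.toFinite.biUnion hfin).subset fun n hn => Set.mem_biUnion hn rfl)
  obtain ⟨n₀, hn₀ : deltaStar δ q0 (w.take n₀) = f⟩ := hf.nonempty
  have hloop : ∀ n ∈ {n | deltaStar δ q0 (w.take n) = f}, n₀ ≤ n →
      deltaStar δ f ((w.drop n₀).take (n - n₀)) = f := by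
    intro n hn hn₀n
    rwa [Set.mem_ofPred, ← Nat.add_sub_cancel' hn₀n, Stream'.take_add, deltaStar_append, hn₀] at hn
  obtain ⟨n₁, hn₁, hlt⟩ := hf.exists_gt n₀
  have ht : (w.drop n₀).take (n₁ - n₀) ≠ [] := by
    rw [← List.length_pos_iff, Stream'.length_take]
    omega
  refine ⟨(w.take n₀, ⟨_, ht⟩), ?_⟩
  dsimp only
  rw [← Stream'.eq_cycle_of_append_comm ht fun n => ?_]
  · exact Stream'.append_take_drop n₀ w
  obtain ⟨m, hm, hnm⟩ := hf.exists_gt (n₀ + n)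
  exact ⟨m - n₀, by omega,
    hcomm f hfF ⟨_, hn₀⟩ _ _ (hloop n₁ hn₁ hlt.le) (hloop m hm (by omega))⟩

end

theorem stmt_4 {Γ : Type*} [Fintype Γ] (L : Set (List Γ))
    (hreg : ∃ (n : ℕ) (q0 : Fin n) (δ : Fin n → Γ → Fin n) (F : Set (Fin n)),
      L = {w | deltaStar δ q0 w ∈ F}) :
    ¬ (Linf L).Countable ↔
      ∀ (Q : Type) [Fintype Q], ∀ (q0 : Q) (δ : Q → Γ → Q) (F : Set Q),
        L = {w | deltaStar δ q0 w ∈ F} →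
        ∃ q : Q,
          (∃ x : List Γ, deltaStar δ q0 x = q) ∧
          ∃ u v : List Γ, deltaStar δ q u = q ∧ deltaStar δ q v = q ∧ u ++ v ≠ v ++ u ∧
            (∃ u' : List Γ, u' <+: u ∧ deltaStar δ q u' ∈ F) ∧
            (∃ v' : List Γ, v' <+: v ∧ deltaStar δ q v' ∈ F) := by
  constructor
  · intro hunc Q _ q0 δ F hL
    by_contra H
    refine hunc (hL ▸ Linf_countable_of_loops_commute q0 δ F fun f hfF hf u v hu hv => ?_)
    by_contra huv
    exact H ⟨f, hf, u, v, hu, hv, huv, ⟨[], List.nil_prefix, hfF⟩, ⟨[], List.nil_prefix, hfF⟩⟩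
  · intro h
    obtain ⟨n, q0, δ, F, rfl⟩ := hreg
    obtain ⟨q, hq, u, v, hu, hv, huv, ⟨u', hu'u, hu'F⟩, ⟨v', hv'v, hv'F⟩⟩ := h (Fin n) q0 δ F rfl
    exact not_countable_Linf_of_loops hq (p := u ++ v) (p' := v ++ u)
      (by rw [deltaStar_append, hu, hv]) (by rw [deltaStar_append, hv, hu])
      (by simp [Nat.add_comm]) huv (hu'u.trans (List.prefix_append u v)) hu'F
      (hv'v.trans (List.prefix_append v u)) hv'F
end

section
/- Under the Setup with Hypothesis (H2), if w, z ∈ adh(L) and w is lexicographically less than or equal to z (as infinite words), then α_w ≤ α_z, i.e., the S-value function is nondecreasing for the lexicographic ordering on adh(L). -/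
open Filter Topology

/-- The set of prefixes of words of a language `L`. -/
def pref {A : Type*} (L : Set (List A)) : Set (List A) := {u | ∃ v ∈ L, u <+: v}

/-- The adherence of a language. -/
def adh {A : Type*} (L : Set (List A)) : Set (ℕ → A) :=
  {w | ∀ ℓ : ℕ, prefixOf w ℓ ∈ pref L}

/-- The center of a language: the finite prefixes of elements of the adherence. -/
def centre {A : Type*} (L : Set (List A)) : Set (List A) :=
  {u | ∃ w ∈ adh L, u = prefixOf w u.length}

/-- `ucomp δ F q n` : number of words of length `n` accepted from state `q`. -/
noncomputable def ucomp {Q A : Type*} (δ : Q → A → Q) (F : Set Q) (q : Q) (n : ℕ) : ℕ :=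
  {z : List A | z.length = n ∧ deltaStar δ q z ∈ F}.ncard

/-- `vcomp δ F q n` : number of words of length at most `n` accepted from state `q`. -/
noncomputable def vcomp {Q A : Type*} (δ : Q → A → Q) (F : Set Q) (q : Q) (n : ℕ) : ℕ :=
  ∑ m ∈ Finset.range (n + 1), ucomp δ F q m

open scoped Classical in
/-- For a word `y`, `alphaFin L r y = s₀ + Σ_{x ∈ centre(L), |x| = |y|, x <_lex y} r x`
where `s₀ = 1 - r ε`.  (Words of length `|y|` are enumerated as `List.ofFn f`
for `f : Fin |y| → A`.) -/
noncomputable def alphaFin {A : Type*} [Fintype A] [LinearOrder A]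
    (L : Set (List A)) (r : List A → ℝ) (y : List A) : ℝ :=
  (1 - r []) +
    ∑ f : Fin y.length → A,
      if List.ofFn f ∈ centre L ∧ List.Lex (· < ·) (List.ofFn f) y then r (List.ofFn f)
      else 0

/-- Lexicographic order on infinite words induced by the order on the alphabet. -/
def infLexLe {A : Type*} [LinearOrder A] (w z : ℕ → A) : Prop :=
  w = z ∨ ∃ k : ℕ, (∀ i < k, w i = z i) ∧ w k < z k

/-!
The weights `r x` are limits of nonnegative ratios, hence nonnegative, so `alphaFin` is monotone
for the lexicographic order on words of a fixed length. If `w ≤ z` lexicographically, their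
prefixes of each length `ℓ` are equal (before the first difference) or lexicographically ordered
(after it), and the inequality passes to the limit.
-/

theorem prefixOf_add {A : Type*} (w : ℕ → A) (k m : ℕ) :
    prefixOf w (k + m) = prefixOf w k ++ prefixOf (fun i => w (k + i)) m := by
  simp only [prefixOf, List.ofFn_add, Fin.val_castLE, Fin.val_natAdd]

theorem prefixOf_succ {A : Type*} (w : ℕ → A) (m : ℕ) :
    prefixOf w (m + 1) = w 0 :: prefixOf (fun i => w (i + 1)) m := by
  simp only [prefixOf, List.ofFn_succ, Fin.val_zero, Fin.val_succ]

theorem prefixOf_eq_of_forall_lt {A : Type*} {w z : ℕ → A} {k ℓ : ℕ}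
    (hwz : ∀ i < k, w i = z i) (hℓ : ℓ ≤ k) : prefixOf w ℓ = prefixOf z ℓ :=
  List.ofFn_inj.2 <| funext fun i => hwz i (i.isLt.trans_le hℓ)

theorem lex_prefixOf_of_lt {A : Type*} [LT A] {w z : ℕ → A} {k ℓ : ℕ}
    (hwz : ∀ i < k, w i = z i) (hk : w k < z k) (hℓ : k < ℓ) :
    List.Lex (· < ·) (prefixOf w ℓ) (prefixOf z ℓ) := by
  obtain ⟨m, rfl⟩ := Nat.exists_eq_add_of_lt hℓ
  rw [add_assoc, prefixOf_add w k, prefixOf_add z k, prefixOf_eq_of_forall_lt hwz le_rfl, prefixOf_succ,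
    prefixOf_succ]
  exact List.Lex.append_left _ (List.Lex.rel hk) _

theorem alphaFin_mono {A : Type*} [Fintype A] [LinearOrder A] (L : Set (List A))
    {r : List A → ℝ} (hr : ∀ x, 0 ≤ r x) {y₁ y₂ : List A} (hlen : y₁.length = y₂.length)
    (hlt : List.Lex (· < ·) y₁ y₂) : alphaFin L r y₁ ≤ alphaFin L r y₂ := by
  rw [alphaFin, alphaFin, hlen]
  gcongr with f
  split_ifs with h₁ h₂
  · exact le_rfl
  · exact absurd ⟨h₁.1, List.lex_trans lt_trans h₁.2 hlt⟩ h₂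
  · exact hr _
  · exact le_rfl

theorem alphaFin_prefixOf_mono {A : Type*} [Fintype A] [LinearOrder A] (L : Set (List A))
    {r : List A → ℝ} (hr : ∀ x, 0 ≤ r x) {w z : ℕ → A} (hwz : infLexLe w z) (ℓ : ℕ) :
    alphaFin L r (prefixOf w ℓ) ≤ alphaFin L r (prefixOf z ℓ) := by
  rcases hwz with rfl | ⟨k, hagree, hk⟩
  · exact le_rfl
  rcases le_or_gt ℓ k with hℓ | hℓ
  · rw [prefixOf_eq_of_forall_lt hagree hℓ]
  · exact alphaFin_mono L hr (by simp [prefixOf]) (lex_prefixOf_of_lt hagree hk hℓ)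

theorem stmt_14_general {Γ : Type*} [Fintype Γ] [LinearOrder Γ]
    (L : Set (List Γ))
    {Q : Type*} (q0 : Q) (δ : Q → Γ → Q) (F : Set Q)
    (r : List Γ → ℝ)
    (hH2 : ∀ x : List Γ,
      Tendsto (fun n : ℕ =>
          (ucomp δ F (deltaStar δ q0 x) (n - x.length) : ℝ) / (vcomp δ F q0 n : ℝ))
        atTop (𝓝 (r x)))
    (w z : ℕ → Γ)
    (hwz : infLexLe w z) (aw az : ℝ)
    (haw : Tendsto (fun ℓ : ℕ => alphaFin L r (prefixOf w ℓ)) atTop (𝓝 aw))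
    (haz : Tendsto (fun ℓ : ℕ => alphaFin L r (prefixOf z ℓ)) atTop (𝓝 az)) :
    aw ≤ az := by
  have hr : ∀ x, 0 ≤ r x := fun x => ge_of_tendsto' (hH2 x) fun n => by positivity
  exact le_of_tendsto_of_tendsto' haw haz (alphaFin_prefixOf_mono L hr hwz)

theorem stmt_14 {Γ : Type*} [Fintype Γ] [LinearOrder Γ]
    (L : Set (List Γ)) (hLinf : L.Infinite) (hpc : pref L = L)
    {Q : Type*} (q0 : Q) (δ : Q → Γ → Q) (F : Set Q)
    (hacc : ∀ q : Q, ∃ x : List Γ, deltaStar δ q0 x = q)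
    (hL : L = {x | deltaStar δ q0 x ∈ F})
    (r : List Γ → ℝ)
    (hH2 : ∀ x : List Γ,
      Tendsto (fun n : ℕ =>
          (ucomp δ F (deltaStar δ q0 x) (n - x.length) : ℝ) / (vcomp δ F q0 n : ℝ))
        atTop (𝓝 (r x)))
    (w z : ℕ → Γ) (hw : w ∈ adh L) (hz : z ∈ adh L)
    (hwz : infLexLe w z) (aw az : ℝ)
    (haw : Tendsto (fun ℓ : ℕ => alphaFin L r (prefixOf w ℓ)) atTop (𝓝 aw))
    (haz : Tendsto (fun ℓ : ℕ => alphaFin L r (prefixOf z ℓ)) atTop (𝓝 az)) :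
    aw ≤ az :=
  stmt_14_general L q0 δ F r hH2 w z hwz aw az haw haz
end
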